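/- arXiv:1311.2776 — 3 statements merged into one kernel-verified Lean document; each statement's English description precedes it below -/
import Mathlib

section
/- For any x ∈ X and γ > 0, let x⁺ = P_x(γF(x)) and φ_γ(x) = F(x) − F(x⁺) + (1/γ)(∇ω(x⁺) − ∇ω(x)). Then the generalized gap function satisfies g̃(x⁺, φ_γ(x)) := sup_{z∈X} ⟨F(x⁺) + φ_γ(x), x⁺ − z⟩ ≤ 0. -/
/-!
The prox point `x⁺` minimises the differentiable function `z ↦ ⟪γ F(x), z⟫ + V(x, z)` over the
convex set `X`, so the first-order optimality condition gives
`0 ≤ ⟪γ F(x) + ∇ω(x⁺) − ∇ω(x), z − x⁺⟫` for all `z ∈ X`. The vector `F(x⁺) + φ_γ(x)` is exactly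
`γ⁻¹ (γ F(x) + ∇ω(x⁺) − ∇ω(x))`, whence the sign of the gap.
-/

open scoped InnerProductSpace

/-- The Bregman distance `V(x,z) = ω(z) − ω(x) − ⟨∇ω(x), z−x⟩`. -/
noncomputable def bregman {n : ℕ} (ω : EuclideanSpace ℝ (Fin n) → ℝ)
    (gω : EuclideanSpace ℝ (Fin n) → EuclideanSpace ℝ (Fin n))
    (x z : EuclideanSpace ℝ (Fin n)) : ℝ :=
  ω z - ω x - ⟪gω x, z - x⟫_ℝ

theorem IsMinOn.inner_gradient_sub_nonneg {E : Type*} [NormedAddCommGroup E]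
    [InnerProductSpace ℝ E] [CompleteSpace E] {f : E → ℝ} {s : Set E} {a z g : E}
    (hs : Convex ℝ s) (h : IsMinOn f s a) (ha : a ∈ s) (hz : z ∈ s)
    (hf : HasGradientAt f g a) : 0 ≤ ⟪g, z - a⟫_ℝ :=
  h.localize.hasFDerivWithinAt_nonneg hf.hasFDerivAt.hasFDerivWithinAt
    (sub_mem_posTangentConeAt_of_segment_subset (hs.segment_subset ha hz))

theorem hasGradientAt_inner_right {E : Type*} [NormedAddCommGroup E]
    [InnerProductSpace ℝ E] [CompleteSpace E] (c y : E) :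
    HasGradientAt (fun z => ⟪c, z⟫_ℝ) c y :=
  (innerSL ℝ c).hasFDerivAt

section
variable {n : ℕ} {ω : EuclideanSpace ℝ (Fin n) → ℝ}
  {gω : EuclideanSpace ℝ (Fin n) → EuclideanSpace ℝ (Fin n)} {x y : EuclideanSpace ℝ (Fin n)}

theorem hasGradientAt_bregman (h : HasGradientAt ω (gω y) y) :
    HasGradientAt (bregman ω gω x) (gω y - gω x) y := by
  rw [hasGradientAt_iff_hasFDerivAt, map_sub]
  have hlin : HasFDerivAt (fun z => ⟪gω x, z - x⟫_ℝ) (innerSL ℝ (gω x)) y := by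
    simpa [Function.comp_def] using
      (innerSL ℝ (gω x)).hasFDerivAt.comp y ((hasFDerivAt_id y).sub_const x)
  exact (h.hasFDerivAt.sub_const (ω x)).sub hlin

theorem hasGradientAt_inner_add_bregman (c : EuclideanSpace ℝ (Fin n))
    (h : HasGradientAt ω (gω y) y) :
    HasGradientAt (fun z => ⟪c, z⟫_ℝ + bregman ω gω x z) (c + (gω y - gω x)) y := by
  rw [hasGradientAt_iff_hasFDerivAt, map_add]
  exact (hasGradientAt_inner_right c y).hasFDerivAt.add (hasGradientAt_bregman h).hasFDerivAt
end

theorem stmt7_general {n : ℕ} (X Xo : Set (EuclideanSpace ℝ (Fin n)))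
    (hXcv : Convex ℝ X)
    (F : EuclideanSpace ℝ (Fin n) → EuclideanSpace ℝ (Fin n))
    (ω : EuclideanSpace ℝ (Fin n) → ℝ)
    (gω : EuclideanSpace ℝ (Fin n) → EuclideanSpace ℝ (Fin n))
    (hgrad : ∀ y ∈ Xo, HasGradientAt ω (gω y) y)
    (x : EuclideanSpace ℝ (Fin n))
    (γ : ℝ) (hγ : 0 < γ)
    (xp : EuclideanSpace ℝ (Fin n)) (hxpX : xp ∈ X) (hxpo : xp ∈ Xo)
    (hxp : IsMinOn (fun z => ⟪γ • F x, z⟫_ℝ + bregman ω gω x z) X xp) :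
    ∀ z ∈ X,
      ⟪F xp + (F x - F xp + γ⁻¹ • (gω xp - gω x)), xp - z⟫_ℝ ≤ 0 := by
  intro z hz
  have hopt : 0 ≤ ⟪γ • F x + (gω xp - gω x), z - xp⟫_ℝ :=
    hxp.inner_gradient_sub_nonneg hXcv hxpX hz
      (hasGradientAt_inner_add_bregman (γ • F x) (hgrad xp hxpo))
  have hφ : F xp + (F x - F xp + γ⁻¹ • (gω xp - gω x))
      = γ⁻¹ • (γ • F x + (gω xp - gω x)) := by
    rw [smul_add, inv_smul_smul₀ hγ.ne']
    abel
  rw [hφ, real_inner_smul_left, ← neg_sub z xp, inner_neg_right, mul_neg, neg_nonpos]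
  exact mul_nonneg (inv_nonneg.mpr hγ.le) hopt

/-- For `x⁺ = P_x(γ F(x))` and `φ_γ(x) = F(x) − F(x⁺) + (1/γ)(∇ω(x⁺) − ∇ω(x))`, the
generalized gap function satisfies `g̃(x⁺, φ_γ(x)) = sup_{z∈X} ⟨F(x⁺)+φ_γ(x), x⁺−z⟩ ≤ 0`. -/
theorem stmt7 {n : ℕ} (X Xo : Set (EuclideanSpace ℝ (Fin n)))
    (hXne : X.Nonempty) (hXcl : IsClosed X) (hXcv : Convex ℝ X) (hXoX : Xo ⊆ X)
    (F : EuclideanSpace ℝ (Fin n) → EuclideanSpace ℝ (Fin n))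
    (hFct : ContinuousOn F X)
    (α : ℝ) (hα : 0 < α)
    (ω : EuclideanSpace ℝ (Fin n) → ℝ)
    (gω : EuclideanSpace ℝ (Fin n) → EuclideanSpace ℝ (Fin n))
    (hωcv : ConvexOn ℝ X ω)
    (hgrad : ∀ y ∈ Xo, HasGradientAt ω (gω y) y)
    (x : EuclideanSpace ℝ (Fin n)) (hx : x ∈ X) (hxo : x ∈ Xo)
    (γ : ℝ) (hγ : 0 < γ)
    (xp : EuclideanSpace ℝ (Fin n)) (hxpX : xp ∈ X) (hxpo : xp ∈ Xo)
    (hxp : IsMinOn (fun z => ⟪γ • F x, z⟫_ℝ + bregman ω gω x z) X xp) :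
    ∀ z ∈ X,
      ⟪F xp + (F x - F xp + γ⁻¹ • (gω xp - gω x)), xp - z⟫_ℝ ≤ 0 :=
  stmt7_general X Xo hXcv F ω gω hgrad x γ hγ xp hxpX hxpo hxp
end

section
/- In the Euclidean setup (‖·‖ = ‖·‖₂, ω(x) = ‖x‖₂²/2) with F Lipschitz continuous with constant L: if, for some x ∈ X and γ > 0, ‖R_γ(x)‖ ≤ ε, then the point x⁺ = Π_X(x − γF(x)) is an ((Lγ+1)ε, 0)-strong solution; in particular if γ ≤ 1/L then x⁺ is a (2ε, 0)-strong solution of VI(X,F). -/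
set_option maxHeartbeats 1000000


open scoped InnerProductSpace


theorem projVI_aux {E : Type*} [NormedAddCommGroup E] [InnerProductSpace ℝ E] (X : Set E)
    (hXcv : Convex ℝ X) (u xp : E) (hxpX : xp ∈ X)
    (hxp : ∀ z ∈ X, ‖u - xp‖ ≤ ‖u - z‖) :
    ∀ w ∈ X, ⟪u - xp, w - xp⟫_ℝ ≤ 0 := by
  haveI : Nonempty X := ⟨⟨xp, hxpX⟩⟩
  have hb : BddBelow (Set.range fun w : X => ‖u - (w : E)‖) := by
    refine ⟨0, ?_⟩; rintro _ ⟨w, rfl⟩; positivity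
  have hinf : ‖u - xp‖ = ⨅ w : X, ‖u - w‖ :=
    le_antisymm (le_ciInf fun w => hxp w w.2) (ciInf_le hb ⟨xp, hxpX⟩)
  exact (norm_eq_iInf_iff_real_inner_le_zero hXcv hxpX).mp hinf

/-- In the Euclidean setup, if `‖R_γ(x)‖ ≤ ε` where
`R_γ(x) = (1/γ)(x − Π_X(x − γF(x)))`, then `x⁺ = Π_X(x − γF(x))` is an
`((Lγ+1)ε, 0)`-strong solution; in particular for `γ ≤ 1/L` it is a
`(2ε, 0)`-strong solution of `VI(X,F)`. -/
theorem stmt10 {n : ℕ} (X : Set (EuclideanSpace ℝ (Fin n)))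
    (hXne : X.Nonempty) (hXcl : IsClosed X) (hXcv : Convex ℝ X)
    (F : EuclideanSpace ℝ (Fin n) → EuclideanSpace ℝ (Fin n))
    (L : ℝ) (hL : 0 < L)
    (hF : ∀ x ∈ X, ∀ y ∈ X, ‖F x - F y‖ ≤ L * ‖x - y‖)
    (x : EuclideanSpace ℝ (Fin n)) (hx : x ∈ X)
    (γ : ℝ) (hγ : 0 < γ) (ε : ℝ) (hε : 0 ≤ ε)
    -- `xp` is the Euclidean metric projection of `x − γF(x)` onto `X`
    (xp : EuclideanSpace ℝ (Fin n)) (hxpX : xp ∈ X)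
    (hxp : ∀ z ∈ X, ‖x - γ • F x - xp‖ ≤ ‖x - γ • F x - z‖)
    (hres : ‖γ⁻¹ • (x - xp)‖ ≤ ε) :
    (∃ φ : EuclideanSpace ℝ (Fin n),
        ‖φ‖ ≤ (L * γ + 1) * ε ∧ ∀ z ∈ X, ⟪F xp + φ, xp - z⟫_ℝ ≤ 0) ∧
      (γ ≤ 1 / L →
        ∃ φ : EuclideanSpace ℝ (Fin n),
          ‖φ‖ ≤ 2 * ε ∧ ∀ z ∈ X, ⟪F xp + φ, xp - z⟫_ℝ ≤ 0) := by
  set u := x - γ • F x with hu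
  have hvi : ∀ w ∈ X, ⟪u - xp, w - xp⟫_ℝ ≤ 0 :=
    projVI_aux X hXcv u xp hxpX hxp
  -- bound on ‖x - xp‖
  have hxxp : ‖x - xp‖ ≤ γ * ε := by
    have h1 : ‖γ⁻¹ • (x - xp)‖ = γ⁻¹ * ‖x - xp‖ := by
      rw [norm_smul, Real.norm_eq_abs, abs_of_pos (inv_pos.mpr hγ)]
    have := hres
    rw [h1] at this
    calc ‖x - xp‖ = γ * (γ⁻¹ * ‖x - xp‖) := by field_simp
      _ ≤ γ * ε := by nlinarith
  set φ := F x - F xp + γ⁻¹ • (xp - x) with hφ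
  have hφbd : ‖φ‖ ≤ (L * γ + 1) * ε := by
    have h1 : ‖F x - F xp‖ ≤ L * ‖x - xp‖ := hF x hx xp hxpX
    have h2 : ‖γ⁻¹ • (xp - x)‖ ≤ ε := by
      rw [show xp - x = -(x - xp) by abel, smul_neg, norm_neg]; exact hres
    calc ‖φ‖ ≤ ‖F x - F xp‖ + ‖γ⁻¹ • (xp - x)‖ := norm_add_le _ _
      _ ≤ L * (γ * ε) + ε := by
          have : L * ‖x - xp‖ ≤ L * (γ * ε) := by nlinarith
          linarith
      _ = (L * γ + 1) * ε := by ring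
  have hsol : ∀ z ∈ X, ⟪F xp + φ, xp - z⟫_ℝ ≤ 0 := by
    intro z hz
    have h := hvi z hz
    have heq : F xp + φ = (-γ⁻¹) • (u - xp) := by
      rw [hφ, hu]
      have hγ1 : γ⁻¹ * γ = 1 := inv_mul_cancel₀ hγ.ne'
      match_scalars <;> simp [hγ1] <;> ring_nf <;> simp [mul_comm γ⁻¹ γ ▸ hγ1]
    rw [heq, real_inner_smul_left]
    have h2 : ⟪u - xp, xp - z⟫_ℝ = -⟪u - xp, z - xp⟫_ℝ := by
      rw [show xp - z = -(z - xp) by abel, inner_neg_right]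
    rw [h2]
    have : (0:ℝ) ≤ γ⁻¹ := le_of_lt (inv_pos.mpr hγ)
    nlinarith
  refine ⟨⟨φ, hφbd, hsol⟩, fun hγL => ⟨φ, ?_, hsol⟩⟩
  have hLγ : L * γ ≤ 1 := by
    rw [le_div_iff₀ hL] at hγL
    linarith [hγL]
  calc ‖φ‖ ≤ (L * γ + 1) * ε := hφbd
    _ ≤ 2 * ε := by nlinarith
end

section
/- Three-point lemma for prox-mappings: Let U ⊆ ℝⁿ be convex, p, ω : U → ℝ differentiable convex functions, V(x,z) = ω(z) − ω(x) − ⟨∇ω(x), z−x⟩, and suppose û minimizes p(u) + V(ũ, u) over U. Then p(û) + V(ũ, û) + V(û, u) ≤ p(u) + V(ũ, u) for all u ∈ U. -/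
/-!
The three-point identity `V(ũ, u) = V(ũ, û) + V(û, u) + ⟪∇ω(û) − ∇ω(ũ), u − û⟫` reduces the claim to
`⟪∇ω(û) − ∇ω(ũ), u − û⟫ ≥ p(û) − p(u)`. This follows by adding the first-order optimality condition
`⟪∇p(û) + ∇ω(û) − ∇ω(ũ), u − û⟫ ≥ 0` for the minimiser `û` to the gradient inequality
`p(u) − p(û) ≥ ⟪∇p(û), u − û⟫` for the convex function `p`.
-/

open scoped InnerProductSpace

section Gradient

variable {F : Type*} [NormedAddCommGroup F] [InnerProductSpace ℝ F] [CompleteSpace F]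
  {f g : F → ℝ} {f' g' x y : F} {s : Set F}

theorem HasGradientAt.add (hf : HasGradientAt f f' x) (hg : HasGradientAt g g' x) :
    HasGradientAt (fun z => f z + g z) (f' + g') x := by
  rw [hasGradientAt_iff_hasFDerivAt] at *
  rw [map_add]
  exact hf.add hg

theorem ConvexOn.inner_gradient_le_sub (hf : ConvexOn ℝ s f) (hx : x ∈ s) (hy : y ∈ s)
    (hf' : HasGradientAt f f' x) : ⟪f', y - x⟫_ℝ ≤ f y - f x := by
  set φ : ℝ → ℝ := f ∘ AffineMap.lineMap x y
  have hφ : ConvexOn ℝ (AffineMap.lineMap x y ⁻¹' s) φ := hf.comp_affineMap _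
  have hφ' : HasDerivAt φ ⟪f', y - x⟫_ℝ 0 := by
    have hf'' := hasGradientAt_iff_hasFDerivAt.mp hf'
    rw [← AffineMap.lineMap_apply_zero x y (k := ℝ)] at hf''
    exact hf''.comp_hasDerivAt 0 AffineMap.hasDerivAt_lineMap
  have h0 : (0 : ℝ) ∈ AffineMap.lineMap x y ⁻¹' s := by simpa using hx
  have h1 : (1 : ℝ) ∈ AffineMap.lineMap x y ⁻¹' s := by simpa using hy
  simpa [φ, slope_def_field] using hφ.le_slope_of_hasDerivAt h0 h1 zero_lt_one hφ'

theorem IsMinOn.inner_gradient_nonneg (hmin : IsMinOn f s x) (hs : Convex ℝ s) (hx : x ∈ s)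
    (hy : y ∈ s) (hf' : HasGradientAt f f' x) : 0 ≤ ⟪f', y - x⟫_ℝ :=
  hmin.localize.hasFDerivWithinAt_nonneg
    (hasGradientAt_iff_hasFDerivAt.mp hf').hasFDerivWithinAt
    (sub_mem_posTangentConeAt_of_segment_subset (hs.segment_subset hx hy))

end Gradient

section Bregman

variable {n : ℕ} (ω : EuclideanSpace ℝ (Fin n) → ℝ)
  (gω : EuclideanSpace ℝ (Fin n) → EuclideanSpace ℝ (Fin n))

theorem bregman_three_point (x y z : EuclideanSpace ℝ (Fin n)) :
    bregman ω gω x z = bregman ω gω x y + bregman ω gω y z + ⟪gω y - gω x, z - y⟫_ℝ := by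
  simp only [bregman, inner_sub_left, inner_sub_right]
  ring

variable {ω gω} in
theorem hasGradientAt_bregman_s11 {x z : EuclideanSpace ℝ (Fin n)}
    (hω : HasGradientAt ω (gω z) z) : HasGradientAt (bregman ω gω x) (gω z - gω x) z := by
  have hlin : HasFDerivAt (fun y => ⟪gω x, y - x⟫_ℝ) (InnerProductSpace.toDual ℝ _ (gω x)) z :=
    ((InnerProductSpace.toDual ℝ _ (gω x)).hasFDerivAt.sub_const ⟪gω x, x⟫_ℝ).congr_of_eventuallyEq
      (Filter.Eventually.of_forall fun y => inner_sub_right _ _ _)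
  rw [hasGradientAt_iff_hasFDerivAt] at *
  rw [map_sub]
  exact (hω.sub_const (ω x)).sub hlin

end Bregman

theorem stmt11_general {n : ℕ} (U : Set (EuclideanSpace ℝ (Fin n))) (hU : Convex ℝ U)
    (p ω : EuclideanSpace ℝ (Fin n) → ℝ)
    (gp gω : EuclideanSpace ℝ (Fin n) → EuclideanSpace ℝ (Fin n))
    (hpcv : ConvexOn ℝ U p)
    (hpgrad : ∀ u ∈ U, HasGradientAt p (gp u) u)
    (hωgrad : ∀ u ∈ U, HasGradientAt ω (gω u) u)
    (ut : EuclideanSpace ℝ (Fin n))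
    (uh : EuclideanSpace ℝ (Fin n)) (huh : uh ∈ U)
    (hmin : IsMinOn (fun u => p u + bregman ω gω ut u) U uh) :
    ∀ u ∈ U,
      p uh + bregman ω gω ut uh + bregman ω gω uh u ≤ p u + bregman ω gω ut u := by
  intro u hu
  have hopt : 0 ≤ ⟪gp uh + (gω uh - gω ut), u - uh⟫_ℝ :=
    hmin.inner_gradient_nonneg hU huh hu
      ((hpgrad uh huh).add (hasGradientAt_bregman_s11 (hωgrad uh huh)))
  have hconv : ⟪gp uh, u - uh⟫_ℝ ≤ p u - p uh := hpcv.inner_gradient_le_sub huh hu (hpgrad uh huh)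
  rw [bregman_three_point ω gω ut uh u]
  rw [inner_add_left] at hopt
  linarith

/-- Three-point lemma: if `û` minimizes `p(u) + V(ũ, u)` over the convex set `U`, then
`p(û) + V(ũ, û) + V(û, u) ≤ p(u) + V(ũ, u)` for all `u ∈ U`. -/
theorem stmt11 {n : ℕ} (U : Set (EuclideanSpace ℝ (Fin n))) (hU : Convex ℝ U)
    (p ω : EuclideanSpace ℝ (Fin n) → ℝ)
    (gp gω : EuclideanSpace ℝ (Fin n) → EuclideanSpace ℝ (Fin n))
    (hpcv : ConvexOn ℝ U p) (hωcv : ConvexOn ℝ U ω)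
    (hpgrad : ∀ u ∈ U, HasGradientAt p (gp u) u)
    (hωgrad : ∀ u ∈ U, HasGradientAt ω (gω u) u)
    (ut : EuclideanSpace ℝ (Fin n)) (hut : ut ∈ U)
    (uh : EuclideanSpace ℝ (Fin n)) (huh : uh ∈ U)
    (hmin : IsMinOn (fun u => p u + bregman ω gω ut u) U uh) :
    ∀ u ∈ U,
      p uh + bregman ω gω ut uh + bregman ω gω uh u ≤ p u + bregman ω gω ut u :=
  stmt11_general U hU p ω gp gω hpcv hpgrad hωgrad ut uh huh hmin
end
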